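/- Let p = r ++ s ++ t be a factorization of a string p with t nonempty, and let d be an integer with 1 ≤ d ≤ |s| and p[|r|+|s|+1] ≠ p[|r|+|s|+1−d]. If p occurs in a string w at position i, then s does not occur in w at position i + |r| + d. -/
import Mathlib


/-- `u` occurs in `w` at position `i`. -/
def OccursAt {α : Type*} (u w : List α) (i : ℕ) : Prop :=
  ∃ w₁ w₂ : List α, w = w₁ ++ u ++ w₂ ∧ w₁.length = i

/-- `d` is a period of `u` (1-based indexing: `u[i] = u[i+d]` for `1 ≤ i ≤ |u| - d`). -/
def IsPeriod {α : Type*} (u : List α) (d : ℕ) : Prop :=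
  1 ≤ d ∧ ∀ i : ℕ, 1 ≤ i → i + d ≤ u.length → u[i-1]? = u[i+d-1]?

/-- `s` is the longest suffix of `u` that is a prefix of `p`. -/
def IsLongestSufPre {α : Type*} (p u s : List α) : Prop :=
  s <:+ u ∧ s <+: p ∧ ∀ t : List α, t <:+ u → t <+: p → t.length ≤ s.length

/-- `s` is the longest prefix of `u` that is a suffix of `p`. -/
def IsLongestPreSuf {α : Type*} (p u s : List α) : Prop :=
  s <+: u ∧ s <:+ p ∧ ∀ t : List α, t <+: u → t <:+ p → t.length ≤ s.length

lemma occ_get {α : Type*} {u w : List α} {i : ℕ} (h : OccursAt u w i)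
    (k : ℕ) (hk : k < u.length) : w[i+k]? = u[k]? := by
  obtain ⟨w₁, w₂, rfl, hl⟩ := h
  rw [List.append_assoc, List.getElem?_append_right (by omega),
    List.getElem?_append_left (by omega)]
  congr 1
  omega

theorem stmt_12 {α : Type*} (p r s t w : List α) (hp : p = r ++ s ++ t)
    (ht : t ≠ []) (d : ℕ) (hd1 : 1 ≤ d) (hds : d ≤ s.length)
    (hmis : p[r.length + s.length]? ≠ p[r.length + s.length - d]?)
    (i : ℕ) (hocc : OccursAt p w i) :
    ¬ OccursAt s w (i + r.length + d) := by
  intro hs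
  have hlp : p.length = r.length + s.length + t.length := by simp [hp]; omega
  have ht' : 0 < t.length := List.length_pos_iff.mpr ht
  have h1 : w[i + (r.length + s.length)]? = p[r.length + s.length]? :=
    occ_get hocc _ (by omega)
  have h3 : w[(i + r.length + d) + (s.length - d)]? = s[s.length - d]? :=
    occ_get hs _ (by omega)
  have h4 : p[r.length + (s.length - d)]? = s[s.length - d]? := by
    rw [hp, List.append_assoc, List.getElem?_append_right (by omega),
      List.getElem?_append_left (by omega)]
    congr 1
    omega
  apply hmis
  have e1 : i + (r.length + s.length) = (i + r.length + d) + (s.length - d) := by omega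
  have e2 : r.length + s.length - d = r.length + (s.length - d) := by omega
  rw [← h1, e1, h3, e2, h4]
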